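/- The log density ratio between the extended IS target σ̃_IS and the IS sampling distribution q_IS simplifies to the log of the average importance weight: log(σ̃_IS(⟨x^(k), x_{−k}⟩)/q_IS(⟨x^(k), x_{−k}⟩)) = log((1/K)·Σ_{i=1}^K w(x^(i))), where w(x) = σ̃(x)/q(x), whenever all relevant densities are positive. -/

import Mathlib

/-- the log density ratio between the extended IS target and the IS
sampling distribution equals the log of the average importance weight, whenever all
relevant densities are positive. -/
theorem stmt13 {X : Type*}
    (sig q : X → ℝ) (K : ℕ) (hK : 0 < K)
    (xp : Fin K → X) (k : Fin K)
    (hq : ∀ i, 0 < q (xp i)) (hsigk : 0 < sig (xp k)) (hsig0 : ∀ i, 0 ≤ sig (xp i)) :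
    Real.log (((1 / (K : ℝ)) * sig (xp k) * ∏ i ∈ Finset.univ.erase k, q (xp i))
        / (((sig (xp k) / q (xp k)) / ∑ i, sig (xp i) / q (xp i)) * ∏ i, q (xp i)))
      = Real.log ((1 / (K : ℝ)) * ∑ i, sig (xp i) / q (xp i)) := by
  have hS : 0 < ∑ i, sig (xp i) / q (xp i) := by
    apply Finset.sum_pos' (fun i _ => div_nonneg (hsig0 i) (hq i).le)
    exact ⟨k, Finset.mem_univ k, div_pos hsigk (hq k)⟩
  have hP : 0 < ∏ i ∈ Finset.univ.erase k, q (xp i) :=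
    Finset.prod_pos fun i _ => hq i
  have hprod : ∏ i, q (xp i) = q (xp k) * ∏ i ∈ Finset.univ.erase k, q (xp i) :=
    (Finset.mul_prod_erase Finset.univ _ (Finset.mem_univ k)).symm
  rw [hprod]
  congr 1
  have hKne : (K : ℝ) ≠ 0 := Nat.cast_ne_zero.mpr hK.ne'
  field_simp
  exact div_self (hq k).ne'
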